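/- Let α, β be nonnegative reals with α² + β² = 1. Then for every binary tree t, ∑_{z} α^{2(leaves(z) − 1)} · β^{2·b(t,z)} = 1, where the sum ranges over all rooted subtrees z of t. -/

import Mathlib

/-- Finite ordered rooted binary trees. -/
inductive BTree where
  | leaf : BTree
  | node : BTree → BTree → BTree
deriving DecidableEq

/-- The number of leaves of a binary tree. -/
def BTree.leaves : BTree → ℕ
  | .leaf => 1
  | .node l r => l.leaves + r.leaves

/-- The finite set of all rooted subtrees of a binary tree: `leaf` is a rooted subtree of
every tree, and `node z₁ z₂` is a rooted subtree of `node l r` iff `z₁` is a rooted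
subtree of `l` and `z₂` is a rooted subtree of `r`. -/
def BTree.subtrees : BTree → Finset BTree
  | .leaf => {BTree.leaf}
  | .node l r =>
      insert BTree.leaf ((l.subtrees ×ˢ r.subtrees).image fun p => BTree.node p.1 p.2)

/-- `bfun t z` is the number of leaves of the rooted subtree `z` that are internal
vertices of `t`. -/
def bfun : BTree → BTree → ℕ
  | BTree.leaf, BTree.leaf => 0
  | BTree.node _ _, BTree.leaf => 1
  | BTree.leaf, BTree.node _ _ => 0
  | BTree.node l r, BTree.node z₁ z₂ => bfun l z₁ + bfun r z₂

/-! Each rooted subtree `z` of `t` is weighted by `a ^ (#internal vertices of z) * b ^ b(t,z)`.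
Splitting off the subtree `leaf`, the weights of the subtrees of `node l r` sum to
`b + a · S(l) · S(r)`, so `a + b = 1` propagates `S = 1` from the leaf to every tree.
Taking `a = α²`, `b = β²` gives the theorem. -/

namespace BTree

lemma one_le_leaves : ∀ t : BTree, 1 ≤ t.leaves
  | leaf => le_rfl
  | node l _ => le_add_right l.one_le_leaves

lemma leaves_node_sub_one (l r : BTree) :
    (node l r).leaves - 1 = (l.leaves - 1) + (r.leaves - 1) + 1 := by
  have := l.one_le_leaves
  have := r.one_le_leaves
  simp only [leaves]
  omega

lemma sum_subtrees_node {M : Type*} [AddCommMonoid M] (l r : BTree) (f : BTree → M) :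
    ∑ z ∈ (node l r).subtrees, f z =
      f leaf + ∑ z₁ ∈ l.subtrees, ∑ z₂ ∈ r.subtrees, f (node z₁ z₂) := by
  have h_leaf : leaf ∉ (l.subtrees ×ˢ r.subtrees).image fun p => node p.1 p.2 := by simp
  have h_inj : Set.InjOn (fun p : BTree × BTree => node p.1 p.2) ↑(l.subtrees ×ˢ r.subtrees) :=
    fun _ _ _ _ h => by simpa [Prod.ext_iff] using h
  rw [subtrees, Finset.sum_insert h_leaf, Finset.sum_image h_inj, Finset.sum_product]

theorem sum_subtrees_pow_mul_pow_bfun {R : Type*} [CommSemiring R] {a b : R} (hab : a + b = 1) :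
    ∀ t : BTree, ∑ z ∈ t.subtrees, a ^ (z.leaves - 1) * b ^ bfun t z = 1
  | leaf => by simp [subtrees, leaves, bfun]
  | node l r => by
    have hl := sum_subtrees_pow_mul_pow_bfun hab l
    have hr := sum_subtrees_pow_mul_pow_bfun hab r
    calc ∑ z ∈ (node l r).subtrees, a ^ (z.leaves - 1) * b ^ bfun (node l r) z
        = b + a * ((∑ z₁ ∈ l.subtrees, a ^ (z₁.leaves - 1) * b ^ bfun l z₁) *
            ∑ z₂ ∈ r.subtrees, a ^ (z₂.leaves - 1) * b ^ bfun r z₂) := by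
          rw [sum_subtrees_node, Finset.sum_mul_sum, Finset.mul_sum]
          congr 1
          · simp [leaves, bfun]
          refine Finset.sum_congr rfl fun z₁ _ => ?_
          rw [Finset.mul_sum]
          refine Finset.sum_congr rfl fun z₂ _ => ?_
          rw [leaves_node_sub_one, bfun]
          ring
      _ = 1 := by rw [hl, hr, mul_one, mul_one, add_comm, hab]

end BTree

theorem stmt9_general (α β : ℝ) (h : α ^ 2 + β ^ 2 = 1) (t : BTree) :
    ∑ z ∈ t.subtrees, α ^ (2 * (z.leaves - 1)) * β ^ (2 * bfun t z) = 1 := by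
  simpa only [pow_mul] using BTree.sum_subtrees_pow_mul_pow_bfun h t

/-- Let `α, β` be nonnegative reals with `α² + β² = 1`. Then for every
binary tree `t`, `∑_z α^(2(leaves z − 1)) · β^(2 b(t,z)) = 1`, the sum ranging over all
rooted subtrees `z` of `t`. -/
theorem stmt9 (α β : ℝ) (hα : 0 ≤ α) (hβ : 0 ≤ β) (h : α ^ 2 + β ^ 2 = 1) (t : BTree) :
    ∑ z ∈ t.subtrees, α ^ (2 * (z.leaves - 1)) * β ^ (2 * bfun t z) = 1 :=
  stmt9_general α β h t
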